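/- arXiv:1507.00596 — 3 statements merged into one kernel-verified Lean document; each statement's English description precedes it below -/
import Mathlib

section
/- For every integer n ≥ 0 and every x ∈ (−1,1), the Cauchy principal value (1/π)·lim_{ρ→0⁺} ∫_{{y ∈ (−1,1) : |y−x| > ρ}} U_n(y)·√(1−y²)/(y−x) dy equals −T_{n+1}(x). -/
/-!
Write `w y = √(1 - y²)`. Truncated Cauchy integrals are linear in the density, and for a density
`(y - x) g y` they converge to `∫ g`. Since `U_{n+2} = 2 y U_{n+1} - U_n`,
`U_{n+2} w = 2 (y - x) U_{n+1} w + 2 x U_{n+1} w - U_n w`. Here `∫ U_m w = 0` for `m ≥ 1`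
because `2 (1 - y²) U_m = T_m - T_{m+2}`, and the `T_k` with `k ≠ 0` are orthogonal to `1`
for the weight `1 / w`. So the principal values of `U_n w` satisfy the recurrence of
`-π T_{n+1}(x)`, and with `U_{-1} = 0` and `∫ U_0 w = π / 2` everything reduces to `n = 0`.

For `w` itself, `w = (1 - x²) / w - (y - x) (y + x) / w` and `∫ (y + x) / w = π x`. The
principal value of `1 / ((y - x) w)` vanishes: this function has the explicit primitive
`(log |y - x| - log (1 - x y + √(1 - x²) w)) / √(1 - x²)`, which vanishes at `±1`, so the
truncated integral is minus its jump across `[x - ρ, x + ρ]`, and that jump tends to `0`.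
-/

open MeasureTheory Filter Set Polynomial

open Real Topology Polynomial.Chebyshev

noncomputable section

def truncSet (x ρ : ℝ) : Set ℝ := {y : ℝ | y ∈ Ioo (-1 : ℝ) 1 ∧ ρ < |y - x|}

def truncatedCauchyIntegral (f : ℝ → ℝ) (x ρ : ℝ) : ℝ :=
  ∫ y in truncSet x ρ, f y / (y - x)

/-- The principal value `ℋf(x)` exists and equals `L / π`. -/
def HasCauchyPV (f : ℝ → ℝ) (x L : ℝ) : Prop :=
  Tendsto (truncatedCauchyIntegral f x) (𝓝[>] 0) (𝓝 L)

section PrincipalValue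

variable {f g : ℝ → ℝ} {x ρ L M : ℝ}

theorem measurableSet_truncSet : MeasurableSet (truncSet x ρ) :=
  measurableSet_Ioo.inter (isOpen_lt continuous_const (continuous_abs.comp
    (continuous_sub_right x))).measurableSet

theorem truncSet_subset_Ioo : truncSet x ρ ⊆ Ioo (-1) 1 := fun _ hy => hy.1

theorem truncSet_eq_union (hx : x ∈ Ioo (-1 : ℝ) 1) (hρ : 0 ≤ ρ) :
    truncSet x ρ = Ioo (-1) (x - ρ) ∪ Ioo (x + ρ) 1 := by
  ext y
  simp only [truncSet, mem_ofPred_eq, mem_Ioo, mem_union, lt_abs] at hx ⊢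
  constructor
  · rintro ⟨⟨h1, h2⟩, h3 | h3⟩
    · exact Or.inr ⟨by linarith, h2⟩
    · exact Or.inl ⟨h1, by linarith⟩
  · rintro (⟨h1, h2⟩ | ⟨h1, h2⟩)
    · exact ⟨⟨h1, by linarith⟩, Or.inr (by linarith)⟩
    · exact ⟨⟨by linarith, h2⟩, Or.inl (by linarith)⟩

theorem integrableOn_div_sub_truncSet (hf : IntegrableOn f (Ioo (-1) 1)) (hρ : 0 < ρ) :
    IntegrableOn (fun y => f y / (y - x)) (truncSet x ρ) := by
  simp_rw [div_eq_mul_inv]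
  refine (hf.mono_set truncSet_subset_Ioo).mul_bdd (c := ρ⁻¹) (by fun_prop) ?_
  filter_upwards [ae_restrict_mem measurableSet_truncSet] with y hy
  rw [norm_inv, Real.norm_eq_abs]
  exact inv_anti₀ hρ hy.2.le

theorem tendsto_setIntegral_truncSet (hg : IntegrableOn g (Ioo (-1) 1)) :
    Tendsto (fun ρ => ∫ y in truncSet x ρ, g y) (𝓝[>] 0)
      (𝓝 (∫ y in Ioo (-1) 1, g y)) := by
  have hmeas (ρ : ℝ) : MeasurableSet {y : ℝ | ρ < |y - x|} :=
    (isOpen_lt continuous_const (by fun_prop)).measurableSet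
  have hind (ρ : ℝ) : ∫ y in truncSet x ρ, g y =
      ∫ y in Ioo (-1) 1, {y : ℝ | ρ < |y - x|}.indicator g y := by
    rw [setIntegral_indicator (hmeas ρ)]
    rfl
  simp_rw [hind]
  refine tendsto_integral_filter_of_dominated_convergence (fun y => ‖g y‖)
    (.of_forall fun ρ => hg.aestronglyMeasurable.indicator (hmeas ρ))
    (.of_forall fun ρ => .of_forall fun y => norm_indicator_le_norm_self _ _) hg.norm ?_
  filter_upwards [ae_restrict_of_ae (measure_eq_zero_iff_ae_notMem.mp (measure_singleton x))]
    with y (hy : y ≠ x)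
  refine tendsto_const_nhds.congr' ?_
  filter_upwards [Ioo_mem_nhdsGT (abs_pos.mpr (sub_ne_zero.mpr hy))] with ρ hρ
  exact (indicator_of_mem (s := {y : ℝ | ρ < |y - x|}) (a := y) hρ.2 g).symm

theorem HasCauchyPV.add (hf : IntegrableOn f (Ioo (-1) 1)) (hg : IntegrableOn g (Ioo (-1) 1))
    (hfL : HasCauchyPV f x L) (hgM : HasCauchyPV g x M) :
    HasCauchyPV (fun y => f y + g y) x (L + M) := by
  refine (Tendsto.add hfL hgM).congr' ?_
  filter_upwards [self_mem_nhdsWithin] with ρ (hρ : 0 < ρ)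
  simp_rw [truncatedCauchyIntegral, add_div]
  exact (integral_add (integrableOn_div_sub_truncSet hf hρ)
    (integrableOn_div_sub_truncSet hg hρ)).symm

theorem HasCauchyPV.sub (hf : IntegrableOn f (Ioo (-1) 1)) (hg : IntegrableOn g (Ioo (-1) 1))
    (hfL : HasCauchyPV f x L) (hgM : HasCauchyPV g x M) :
    HasCauchyPV (fun y => f y - g y) x (L - M) := by
  refine (Tendsto.sub hfL hgM).congr' ?_
  filter_upwards [self_mem_nhdsWithin] with ρ (hρ : 0 < ρ)
  simp_rw [truncatedCauchyIntegral, sub_div]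
  exact (integral_sub (integrableOn_div_sub_truncSet hf hρ)
    (integrableOn_div_sub_truncSet hg hρ)).symm

theorem HasCauchyPV.const_mul (c : ℝ) (hfL : HasCauchyPV f x L) :
    HasCauchyPV (fun y => c * f y) x (c * L) := by
  refine (Tendsto.const_mul c hfL).congr fun ρ => ?_
  simp_rw [truncatedCauchyIntegral, mul_div_assoc]
  exact (integral_const_mul c _).symm

theorem hasCauchyPV_sub_mul (hg : IntegrableOn g (Ioo (-1) 1)) :
    HasCauchyPV (fun y => (y - x) * g y) x (∫ y in Ioo (-1) 1, g y) := by
  refine (tendsto_setIntegral_truncSet (x := x) hg).congr' ?_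
  filter_upwards [self_mem_nhdsWithin] with ρ (hρ : 0 < ρ)
  refine setIntegral_congr_fun measurableSet_truncSet fun y hy => ?_
  have : y - x ≠ 0 := abs_pos.mp (hρ.trans hy.2)
  field_simp

end PrincipalValue

/-- A primitive of `y ↦ (√(1 - y²))⁻¹ / (y - x)` on each side of `x`: `Real.log` is even, so
`log (y - x)` serves for `y < x` as well. -/
def invSqrtDivSubPrimitive (x y : ℝ) : ℝ :=
  (√(1 - x ^ 2))⁻¹ * (log (y - x) - log (1 - x * y + √(1 - x ^ 2) * √(1 - y ^ 2)))

section InvSqrt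

variable {x y a b ρ : ℝ}

theorem integrableOn_inv_sqrt_one_sub_sq :
    IntegrableOn (fun y : ℝ => (√(1 - y ^ 2))⁻¹) (Ioo (-1) 1) := by
  simp_rw [← sqrt_inv]
  exact (intervalIntegrable_iff_integrableOn_Ioo_of_le (by norm_num)).1
    intervalIntegrable_sqrt_one_sub_sq_inv

theorem one_sub_mul_add_sqrt_mul_sqrt_pos (hx : x ∈ Ioo (-1 : ℝ) 1)
    (hy : y ∈ Icc (-1 : ℝ) 1) :
    0 < 1 - x * y + √(1 - x ^ 2) * √(1 - y ^ 2) := by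
  have : x * y < 1 := calc
    x * y ≤ |x| * |y| := abs_mul x y ▸ le_abs_self _
    _ ≤ |x| := mul_le_of_le_one_right (abs_nonneg x) (abs_le.2 hy)
    _ < 1 := abs_lt.2 hx
  linarith [mul_nonneg (sqrt_nonneg (1 - x ^ 2)) (sqrt_nonneg (1 - y ^ 2))]

theorem hasDerivAt_invSqrtDivSubPrimitive (hx : x ∈ Ioo (-1 : ℝ) 1)
    (hy : y ∈ Ioo (-1 : ℝ) 1) (hyx : y ≠ x) :
    HasDerivAt (invSqrtDivSubPrimitive x) ((√(1 - y ^ 2))⁻¹ / (y - x)) y := by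
  have hs : 0 < √(1 - x ^ 2) := sqrt_pos.2 (by nlinarith [hx.1, hx.2])
  have hw : 0 < √(1 - y ^ 2) := sqrt_pos.2 (by nlinarith [hy.1, hy.2])
  have hD := one_sub_mul_add_sqrt_mul_sqrt_pos hx (Ioo_subset_Icc_self hy)
  have hsqrt : HasDerivAt (fun y => √(1 - y ^ 2)) (-(2 * y) / (2 * √(1 - y ^ 2))) y := by
    refine ((hasDerivAt_pow 2 y).const_sub 1).sqrt (by nlinarith [hy.1, hy.2])
      |>.congr_deriv ?_
    ring
  have hDderiv : HasDerivAt (fun y => 1 - x * y + √(1 - x ^ 2) * √(1 - y ^ 2))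
      (-x + √(1 - x ^ 2) * (-(2 * y) / (2 * √(1 - y ^ 2)))) y := by
    refine (((hasDerivAt_id y).const_mul x).const_sub 1).add (hsqrt.const_mul _)
      |>.congr_deriv ?_
    ring
  have hlog := ((hasDerivAt_id' y).sub_const x).log (sub_ne_zero.2 hyx)
  refine ((hlog.sub (hDderiv.log hD.ne')).const_mul (√(1 - x ^ 2))⁻¹).congr_deriv ?_
  have hs2 : √(1 - x ^ 2) ^ 2 = 1 - x ^ 2 := sq_sqrt (by nlinarith [hx.1, hx.2])
  have hw2 : √(1 - y ^ 2) ^ 2 = 1 - y ^ 2 := sq_sqrt (by nlinarith [hy.1, hy.2])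
  have hyx' : y - x ≠ 0 := sub_ne_zero.2 hyx
  field_simp
  linear_combination (-√(1 - y ^ 2)) * hs2 + √(1 - x ^ 2) * hw2

theorem continuousOn_invSqrtDivSubPrimitive (hx : x ∈ Ioo (-1 : ℝ) 1) :
    ContinuousOn (invSqrtDivSubPrimitive x) (Icc (-1) 1 \ {x}) := by
  refine continuousOn_const.mul (ContinuousOn.sub ?_ ?_)
  · exact (continuousOn_id.sub continuousOn_const).log fun y hy => sub_ne_zero.2 hy.2
  · exact (Continuous.continuousOn (by fun_prop)).log fun y hy =>
      (one_sub_mul_add_sqrt_mul_sqrt_pos hx hy.1).ne'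

theorem invSqrtDivSubPrimitive_one : invSqrtDivSubPrimitive x 1 = 0 := by
  simp [invSqrtDivSubPrimitive]

theorem invSqrtDivSubPrimitive_neg_one : invSqrtDivSubPrimitive x (-1) = 0 := by
  rw [invSqrtDivSubPrimitive, show -1 - x = -(1 + x) by ring, log_neg_eq_log]
  norm_num [add_comm]

theorem tendsto_invSqrtDivSubPrimitive_sub_sub_add (hx : x ∈ Ioo (-1 : ℝ) 1) :
    Tendsto (fun ρ => invSqrtDivSubPrimitive x (x - ρ) - invSqrtDivSubPrimitive x (x + ρ))
      (𝓝 0) (𝓝 0) := by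
  have hDx := (one_sub_mul_add_sqrt_mul_sqrt_pos hx (Ioo_subset_Icc_self hx)).ne'
  have hcont : ContinuousAt (fun ρ => (√(1 - x ^ 2))⁻¹ *
      (log (1 - x * (x + ρ) + √(1 - x ^ 2) * √(1 - (x + ρ) ^ 2)) -
        log (1 - x * (x - ρ) + √(1 - x ^ 2) * √(1 - (x - ρ) ^ 2)))) 0 := by
    refine continuousAt_const.mul (ContinuousAt.sub ?_ ?_) <;>
      exact ContinuousAt.log (by fun_prop) (by simpa using hDx)
  convert hcont.tendsto using 2 with ρ
  · rw [invSqrtDivSubPrimitive, invSqrtDivSubPrimitive, sub_sub_cancel_left, add_sub_cancel_left,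
      log_neg_eq_log]
    ring
  · simp

theorem integral_Ioo_inv_sqrt_div_sub (hx : x ∈ Ioo (-1 : ℝ) 1) (ha : -1 ≤ a) (hab : a ≤ b)
    (hb : b ≤ 1) (hxab : x ∉ Icc a b)
    (hint : IntegrableOn (fun y => (√(1 - y ^ 2))⁻¹ / (y - x)) (Ioo a b)) :
    ∫ y in Ioo a b, (√(1 - y ^ 2))⁻¹ / (y - x) =
      invSqrtDivSubPrimitive x b - invSqrtDivSubPrimitive x a := by
  rw [← integral_Ioc_eq_integral_Ioo, ← intervalIntegral.integral_of_le hab]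
  refine intervalIntegral.integral_eq_sub_of_hasDerivAt_of_le hab
    ((continuousOn_invSqrtDivSubPrimitive hx).mono fun y hy => ⟨?_, ?_⟩) (fun y hy => ?_)
    ((intervalIntegrable_iff_integrableOn_Ioo_of_le hab).2 hint)
  · exact ⟨ha.trans hy.1, hy.2.trans hb⟩
  · rintro rfl; exact hxab hy
  · exact hasDerivAt_invSqrtDivSubPrimitive hx ⟨ha.trans_lt hy.1, hy.2.trans_le hb⟩
      fun h => hxab (h ▸ Ioo_subset_Icc_self hy)

theorem truncatedCauchyIntegral_inv_sqrt (hx : x ∈ Ioo (-1 : ℝ) 1) (hρ : 0 < ρ)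
    (hρ₁ : ρ < 1 - x) (hρ₂ : ρ < 1 + x) :
    truncatedCauchyIntegral (fun y => (√(1 - y ^ 2))⁻¹) x ρ =
      invSqrtDivSubPrimitive x (x - ρ) - invSqrtDivSubPrimitive x (x + ρ) := by
  have hint := integrableOn_div_sub_truncSet (x := x) integrableOn_inv_sqrt_one_sub_sq hρ
  rw [truncSet_eq_union hx hρ.le] at hint
  have hleft := hint.mono_set subset_union_left
  have hright := hint.mono_set subset_union_right
  rw [truncatedCauchyIntegral, truncSet_eq_union hx hρ.le,
    setIntegral_union (disjoint_left.2 fun y h₁ h₂ => by linarith [h₁.2, h₂.1])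
      measurableSet_Ioo hleft hright,
    integral_Ioo_inv_sqrt_div_sub hx le_rfl (by linarith) (by linarith)
      (fun h => by linarith [h.2]) hleft,
    integral_Ioo_inv_sqrt_div_sub hx (by linarith) (by linarith) le_rfl
      (fun h => by linarith [h.1]) hright,
    invSqrtDivSubPrimitive_one, invSqrtDivSubPrimitive_neg_one]
  ring

theorem hasCauchyPV_inv_sqrt (hx : x ∈ Ioo (-1 : ℝ) 1) :
    HasCauchyPV (fun y => (√(1 - y ^ 2))⁻¹) x 0 := by
  refine ((tendsto_invSqrtDivSubPrimitive_sub_sub_add hx).mono_left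
    nhdsWithin_le_nhds).congr' ?_
  have hpos : 0 < min (1 - x) (1 + x) := lt_min (by linarith [hx.2]) (by linarith [hx.1])
  filter_upwards [Ioo_mem_nhdsGT hpos] with ρ hρ
  exact (truncatedCauchyIntegral_inv_sqrt hx hρ.1 (hρ.2.trans_le (min_le_left _ _))
    (hρ.2.trans_le (min_le_right _ _))).symm

theorem integrableOn_add_mul_inv_sqrt (x : ℝ) :
    IntegrableOn (fun y => (y + x) * (√(1 - y ^ 2))⁻¹) (Ioo (-1) 1) :=
  integrableOn_inv_sqrt_one_sub_sq.continuousOn_mul_of_subset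
    (continuous_add_const x).continuousOn isCompact_Icc measurableSet_Ioo Ioo_subset_Icc_self

theorem integral_add_mul_inv_sqrt (x : ℝ) :
    ∫ y in Ioo (-1) 1, (y + x) * (√(1 - y ^ 2))⁻¹ = π * x := by
  have hderiv (y : ℝ) (hy : y ∈ Ioo (-1 : ℝ) 1) :
      HasDerivAt (fun y => x * arcsin y - √(1 - y ^ 2)) ((y + x) * (√(1 - y ^ 2))⁻¹) y := by
    have hw : 0 < √(1 - y ^ 2) := sqrt_pos.2 (by nlinarith [hy.1, hy.2])
    refine ((hasDerivAt_arcsin hy.1.ne' hy.2.ne).const_mul x).sub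
      (((hasDerivAt_pow 2 y).const_sub 1).sqrt (by nlinarith [hy.1, hy.2])) |>.congr_deriv ?_
    field_simp
    ring
  rw [← integral_Ioc_eq_integral_Ioo, ← intervalIntegral.integral_of_le (by norm_num),
    intervalIntegral.integral_eq_sub_of_hasDerivAt_of_le (by norm_num) (by fun_prop) hderiv
      ((intervalIntegrable_iff_integrableOn_Ioo_of_le (by norm_num)).2
        (integrableOn_add_mul_inv_sqrt x))]
  simp
  ring

theorem hasCauchyPV_sqrt (hx : x ∈ Ioo (-1 : ℝ) 1) :
    HasCauchyPV (fun y => √(1 - y ^ 2)) x (-(π * x)) := by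
  have hsplit : (fun y => √(1 - y ^ 2)) = fun y =>
      (1 - x ^ 2) * (√(1 - y ^ 2))⁻¹ - (y - x) * ((y + x) * (√(1 - y ^ 2))⁻¹) := by
    funext y
    have h := div_sqrt (x := 1 - y ^ 2)
    rw [div_eq_mul_inv] at h
    linear_combination -h
  rw [hsplit, show -(π * x) = (1 - x ^ 2) * 0 -
      ∫ y in Ioo (-1) 1, (y + x) * (√(1 - y ^ 2))⁻¹ by rw [integral_add_mul_inv_sqrt]; ring]
  exact HasCauchyPV.sub (integrableOn_inv_sqrt_one_sub_sq.const_mul _)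
    ((integrableOn_add_mul_inv_sqrt x).continuousOn_mul_of_subset
      (continuous_sub_right x).continuousOn isCompact_Icc measurableSet_Ioo Ioo_subset_Icc_self)
    ((hasCauchyPV_inv_sqrt hx).const_mul _)
    (hasCauchyPV_sub_mul (integrableOn_add_mul_inv_sqrt x))

end InvSqrt

theorem Polynomial.Chebyshev.two_mul_one_sub_X_sq_mul_U (R : Type*) [CommRing R] (n : ℤ) :
    2 * ((1 - X ^ 2) * U R n) = T R n - T R (n + 2) := by
  linear_combination 2 * one_sub_X_sq_mul_U_eq_pol_in_T R n - T_add_two R n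

theorem integral_eval_U_mul_sqrt (n : ℤ) :
    ∫ y in Ioo (-1) 1, (U ℝ n).eval y * √(1 - y ^ 2) =
      ((∫ y, (T ℝ n).eval y ∂measureT) - ∫ y, (T ℝ (n + 2)).eval y ∂measureT) / 2 := by
  rw [← integral_sub (integrable_measureT (by fun_prop)) (integrable_measureT (by fun_prop)),
    integral_measureT, intervalIntegral.integral_of_le (by norm_num), integral_Ioc_eq_integral_Ioo,
    ← integral_div]
  refine setIntegral_congr_fun measurableSet_Ioo fun y _ => ?_
  have hT := congrArg (eval y) (two_mul_one_sub_X_sq_mul_U ℝ n)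
  simp only [eval_mul, eval_sub, eval_pow, eval_X, eval_one, eval_ofNat] at hT
  rw [sqrt_inv]
  linear_combination (-(U ℝ n).eval y) * div_sqrt (x := 1 - y ^ 2) +
    ((√(1 - y ^ 2))⁻¹ / 2) * hT

theorem HasCauchyPV.eval_U_mul_sqrt_add_two {x L M : ℝ} (n : ℤ)
    (hL : HasCauchyPV (fun y => (U ℝ n).eval y * √(1 - y ^ 2)) x L)
    (hM : HasCauchyPV (fun y => (U ℝ (n + 1)).eval y * √(1 - y ^ 2)) x M) :
    HasCauchyPV (fun y => (U ℝ (n + 2)).eval y * √(1 - y ^ 2)) x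
      (2 * (∫ y in Ioo (-1) 1, (U ℝ (n + 1)).eval y * √(1 - y ^ 2)) + 2 * x * M - L) := by
  have hint {f : ℝ → ℝ} (hf : Continuous f) : IntegrableOn f (Ioo (-1) 1) :=
    hf.integrableOn_Icc.mono_set Ioo_subset_Icc_self
  have hsplit : (fun y => (U ℝ (n + 2)).eval y * √(1 - y ^ 2)) = fun y =>
      (y - x) * (2 * ((U ℝ (n + 1)).eval y * √(1 - y ^ 2))) +
        2 * x * ((U ℝ (n + 1)).eval y * √(1 - y ^ 2)) - (U ℝ n).eval y * √(1 - y ^ 2) := by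
    funext y
    simp only [U_add_two, eval_sub, eval_mul, eval_X, eval_ofNat]
    ring
  rw [hsplit, ← integral_const_mul]
  refine ((hasCauchyPV_sub_mul ?_).add ?_ ?_ (hM.const_mul (2 * x))).sub ?_ ?_ hL <;>
    exact hint (by fun_prop)

theorem hasCauchyPV_eval_U_mul_sqrt {x : ℝ} (hx : x ∈ Ioo (-1 : ℝ) 1) (n : ℕ) :
    HasCauchyPV (fun y => (U ℝ n).eval y * √(1 - y ^ 2)) x
      (-(π * (T ℝ (n + 1)).eval x)) := by
  have h₀ : HasCauchyPV (fun y => (U ℝ 0).eval y * √(1 - y ^ 2)) x (-(π * x)) := by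
    simpa using hasCauchyPV_sqrt hx
  induction n using Nat.twoStepInduction with
  | zero => simpa using h₀
  | one =>
    have hneg : HasCauchyPV (fun y => (U ℝ (-1)).eval y * √(1 - y ^ 2)) x 0 := by
      refine tendsto_const_nhds.congr fun ρ => ?_
      simp [truncatedCauchyIntegral, U_neg_one]
    have := HasCauchyPV.eval_U_mul_sqrt_add_two (-1) hneg (by simpa using h₀)
    rw [integral_eval_U_mul_sqrt, show (-1 : ℤ) + 1 = 0 by norm_num,
      integral_eval_T_real_measureT_zero,
      integral_eval_T_real_measureT_of_ne_zero (by norm_num)] at this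
    norm_num [T_two] at this ⊢
    convert this using 1
    ring
  | more n ih₀ ih₁ =>
    push_cast at ih₁ ⊢
    have := HasCauchyPV.eval_U_mul_sqrt_add_two n ih₀ ih₁
    rw [integral_eval_U_mul_sqrt, integral_eval_T_real_measureT_of_ne_zero (by omega),
      integral_eval_T_real_measureT_of_ne_zero (by omega)] at this
    convert this using 1
    rw [show (n : ℤ) + 2 + 1 = n + 1 + 2 by ring, T_add_two]
    simp only [eval_sub, eval_mul, eval_X, eval_ofNat]
    ring

/-- Hilbert transform of weighted Chebyshev polynomials of the second kind:
`ℋ[U_n(y)·√(1-y²)](x) = -T_{n+1}(x)` as a Cauchy principal value. -/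
theorem hilbert_transform_weighted_chebyshevU (n : ℕ) (x : ℝ)
    (hx : x ∈ Set.Ioo (-1 : ℝ) 1) :
    Tendsto (fun ρ : ℝ =>
        (1 / Real.pi) * ∫ y in {y : ℝ | y ∈ Set.Ioo (-1 : ℝ) 1 ∧ ρ < |y - x|},
          (Polynomial.Chebyshev.U ℝ n).eval y * Real.sqrt (1 - y ^ 2) / (y - x))
      (nhdsWithin 0 (Set.Ioi 0))
      (nhds (-(Polynomial.Chebyshev.T ℝ (n + 1)).eval x)) := by
  rw [show -(T ℝ (n + 1)).eval x = 1 / π * -(π * (T ℝ (n + 1)).eval x) by field_simp]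
  exact Tendsto.const_mul (1 / π) (hasCauchyPV_eval_U_mul_sqrt hx n)
end
end

section
/- For every integer k ≥ 2 and every z ∈ ℂ∖[−1,1], (1/(2πi)) ∫_{−1}^{1} (T_k(t) − T_{k−2}(t))/(√(1−t²)·(t−z)) dt = −i·(J₊⁻¹(z))^{k−1}. -/
open MeasureTheory Filter Set Polynomial

/-- The inverse Joukowsky transform mapping the slit plane to the unit disk,
`J₊⁻¹(z) = z - (z-1)^{1/2} (z+1)^{1/2}` with principal-branch square roots. -/
noncomputable def Jinv (z : ℂ) : ℂ :=
  z - (z - 1) ^ ((1 : ℂ) / 2) * (z + 1) ^ ((1 : ℂ) / 2)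

/-!
Substituting `t = cos θ` turns the integral into `∫₀^π (cos kθ - cos (k-2)θ) / (cos θ - z) dθ`.
Let `w = J₊⁻¹(z)`: it is the root of `w² - 2zw + 1 = 0` inside the unit disk, so that
`2w (z - cos θ) = (1 - w e^{iθ}) (1 - w e^{-iθ})`. The moments
`Iₙ = ∫₀^π cos nθ / (cos θ - z) dθ` satisfy the Chebyshev recurrence `Iₙ₊₂ = 2z Iₙ₊₁ - Iₙ`,
hence `Iₙ = I₀ wⁿ`, and the factorisation gives `I₀ = -2πw / (1 - w²)` through the logarithmic
primitive `θ + i log (1 - w e^{iθ}) - i log (1 - w e^{-iθ})`. Then `I_k - I_{k-2} = 2π w^{k-1}`.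
-/

open Complex
open scoped ComplexConjugate

namespace Complex

lemma cpow_one_div_two_sq (x : ℂ) : (x ^ ((1 : ℂ) / 2)) ^ 2 = x := by
  rw [one_div, cpow_ofNat_inv_pow]

lemma im_cpow_one_div_two_mul_im_nonneg {x y : ℂ} (h : x.im = y.im) :
    0 ≤ (x ^ ((1 : ℂ) / 2)).im * (y ^ ((1 : ℂ) / 2)).im := by
  rw [one_div]
  rcases le_or_gt 0 x.im with hx | hx
  · rw [cpow_inv_two_im_eq_sqrt hx, cpow_inv_two_im_eq_sqrt (h ▸ hx)]
    positivity
  · rw [cpow_inv_two_im_eq_neg_sqrt hx, cpow_inv_two_im_eq_neg_sqrt (h ▸ hx), neg_mul_neg]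
    positivity

lemma re_cpow_one_div_two_nonneg (x : ℂ) : 0 ≤ (x ^ ((1 : ℂ) / 2)).re := by
  rw [one_div, cpow_inv_two_re]
  positivity

lemma one_sub_mul_mem_slitPlane {w u : ℂ} (hw : ‖w‖ < 1) (hu : ‖u‖ = 1) :
    1 - w * u ∈ slitPlane := by
  rw [sub_eq_add_neg]
  apply mem_slitPlane_of_norm_lt_one
  rwa [norm_neg, norm_mul, hu, mul_one]

lemma norm_exp_neg_ofReal_mul_I (θ : ℝ) : ‖exp (-(θ * I))‖ = 1 := by
  simp [norm_exp]

lemma mem_image_ofReal_Icc_of_norm_eq_one {w z : ℂ} (hw : ‖w‖ = 1)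
    (hq : w ^ 2 + 1 = 2 * z * w) : z ∈ ofReal '' Icc (-1) 1 := by
  have hw0 : w ≠ 0 := norm_ne_zero_iff.mp (by rw [hw]; exact one_ne_zero)
  have hinv : w⁻¹ = conj w := by
    rw [inv_def, normSq_eq_norm_sq, hw]; simp
  have hz : z = (w.re : ℂ) := by
    rw [re_eq_add_conj, ← hinv]
    field_simp
    linear_combination -hq
  have hre := abs_re_le_norm w
  rw [hw] at hre
  exact ⟨w.re, abs_le.mp hre, hz.symm⟩

end Complex

lemma Jinv_sq_add_one (z : ℂ) : Jinv z ^ 2 + 1 = 2 * z * Jinv z := by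
  have ha := cpow_one_div_two_sq (z - 1)
  have hb := cpow_one_div_two_sq (z + 1)
  unfold Jinv
  linear_combination (z + 1) * ha + ((z - 1) ^ ((1 : ℂ) / 2)) ^ 2 * hb

lemma norm_Jinv_le_one (z : ℂ) : ‖Jinv z‖ ≤ 1 := by
  set a := (z - 1) ^ ((1 : ℂ) / 2)
  set b := (z + 1) ^ ((1 : ℂ) / 2)
  have ha : a ^ 2 = z - 1 := cpow_one_div_two_sq _
  have hb : b ^ 2 = z + 1 := cpow_one_div_two_sq _
  have hJ : Jinv z = z - a * b := rfl
  -- `z ∓ ab = (a ∓ b)² / 2`, and `|a - b| ≤ |a + b|` since `a conj b` has nonnegative real part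
  have hdot : 0 ≤ a.re * b.re + a.im * b.im :=
    add_nonneg (mul_nonneg (re_cpow_one_div_two_nonneg _) (re_cpow_one_div_two_nonneg _))
      (im_cpow_one_div_two_mul_im_nonneg (by simp))
  have hsub : ‖a - b‖ ≤ ‖a + b‖ := by
    rw [← sq_le_sq₀ (norm_nonneg _) (norm_nonneg _), ← normSq_eq_norm_sq, ← normSq_eq_norm_sq]
    simp only [normSq_apply, sub_re, sub_im, add_re, add_im]
    nlinarith
  have hle : ‖z - a * b‖ ≤ ‖z + a * b‖ := by
    rw [show z - a * b = (a - b) ^ 2 / 2 by linear_combination -ha / 2 - hb / 2,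
      show z + a * b = (a + b) ^ 2 / 2 by linear_combination -ha / 2 - hb / 2,
      norm_div, norm_div, norm_pow, norm_pow]
    gcongr
  have hprod : ‖z - a * b‖ * ‖z + a * b‖ = 1 := by
    have hone : (z - a * b) * (z + a * b) = 1 := by
      linear_combination -(z + 1) * ha - a ^ 2 * hb
    rw [← norm_mul, hone, norm_one]
  rw [hJ]
  nlinarith [norm_nonneg (z - a * b)]

lemma norm_Jinv_lt_one {z : ℂ} (hz : z ∉ ofReal '' Icc (-1 : ℝ) 1) : ‖Jinv z‖ < 1 :=
  (norm_Jinv_le_one z).lt_of_ne fun h =>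
    hz (mem_image_ofReal_Icc_of_norm_eq_one h (Jinv_sq_add_one z))

section

variable {w z : ℂ}

lemma hasDerivAt_log_one_sub_mul_exp {c : ℂ} {θ : ℝ} (h : 1 - w * exp (θ * c) ∈ slitPlane) :
    HasDerivAt (fun θ : ℝ => log (1 - w * exp (θ * c)))
      (-(w * exp (θ * c) * c) / (1 - w * exp (θ * c))) θ := by
  have hexp : HasDerivAt (fun θ : ℝ => exp (θ * c)) (exp (θ * c) * c) θ := by
    simpa using ((hasDerivAt_id (θ : ℂ)).mul_const c).cexp.comp_ofReal
  simpa [mul_assoc] using ((hexp.const_mul w).const_sub 1).clog_real h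

lemma two_mul_mul_sub_cos (hq : w ^ 2 + 1 = 2 * z * w) (θ : ℝ) :
    2 * w * (z - Real.cos θ) = (1 - w * exp (θ * I)) * (1 - w * exp (-(θ * I))) := by
  have hprod : exp (θ * I) * exp (-(θ * I)) = 1 := by rw [← exp_add]; simp
  rw [ofReal_cos, cos, neg_mul]
  linear_combination -w ^ 2 * hprod - hq

lemma cos_sub_ne_zero (hw : ‖w‖ < 1) (hq : w ^ 2 + 1 = 2 * z * w) (θ : ℝ) :
    (Real.cos θ : ℂ) - z ≠ 0 := by
  intro h
  have hfac := two_mul_mul_sub_cos hq θ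
  rw [show z - Real.cos θ = 0 by linear_combination -h, mul_zero, eq_comm, mul_eq_zero] at hfac
  rcases hfac with h₁ | h₂
  · exact slitPlane_ne_zero (one_sub_mul_mem_slitPlane hw (norm_exp_ofReal_mul_I θ)) h₁
  · exact slitPlane_ne_zero (one_sub_mul_mem_slitPlane hw (norm_exp_neg_ofReal_mul_I θ)) h₂

lemma one_sub_sq_ne_zero (hw : ‖w‖ < 1) : 1 - w ^ 2 ≠ 0 := by
  intro h
  have : ‖w‖ ^ 2 = 1 := by rw [← norm_pow, ← sub_eq_zero.mp h, norm_one]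
  nlinarith [norm_nonneg w]

lemma inv_cos_sub_eq (hw : ‖w‖ < 1) (hq : w ^ 2 + 1 = 2 * z * w) (θ : ℝ) :
    ((Real.cos θ : ℂ) - z)⁻¹ = -2 * w / (1 - w ^ 2) *
      (1 + w * exp (θ * I) / (1 - w * exp (θ * I))
        + w * exp (-(θ * I)) / (1 - w * exp (-(θ * I)))) := by
  have h₁ := slitPlane_ne_zero (one_sub_mul_mem_slitPlane hw (norm_exp_ofReal_mul_I θ))
  have h₂ := slitPlane_ne_zero (one_sub_mul_mem_slitPlane hw (norm_exp_neg_ofReal_mul_I θ))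
  have hprod : exp (θ * I) * exp (-(θ * I)) = 1 := by rw [← exp_add]; simp
  have hfac := two_mul_mul_sub_cos hq θ
  have := cos_sub_ne_zero hw hq θ
  have := one_sub_sq_ne_zero hw
  field_simp
  linear_combination (-(1 - w ^ 2)) * hfac + (- 2 * w * (Real.cos θ - z) * w ^ 2) * hprod

lemma integral_inv_cos_sub (hw : ‖w‖ < 1) (hq : w ^ 2 + 1 = 2 * z * w) :
    ∫ θ in (0 : ℝ)..Real.pi, ((Real.cos θ : ℂ) - z)⁻¹ = -2 * Real.pi * w / (1 - w ^ 2) := by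
  set F : ℝ → ℂ := fun θ => θ + I * log (1 - w * exp (θ * I)) - I * log (1 - w * exp (θ * -I))
  have hF : ∀ θ : ℝ, HasDerivAt F (1 + w * exp (θ * I) / (1 - w * exp (θ * I))
      + w * exp (-(θ * I)) / (1 - w * exp (-(θ * I)))) θ := by
    intro θ
    have hlog₁ := hasDerivAt_log_one_sub_mul_exp
      (one_sub_mul_mem_slitPlane hw (norm_exp_ofReal_mul_I θ))
    have hlog₂ := hasDerivAt_log_one_sub_mul_exp (c := -I)
      (one_sub_mul_mem_slitPlane (u := exp (θ * -I)) hw (by simp [norm_exp]))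
    refine (((hasDerivAt_id θ).ofReal_comp.add (hlog₁.const_mul I)).sub
      (hlog₂.const_mul I)).congr_deriv ?_
    simp only [mul_neg, ofReal_one]
    linear_combination -(w * exp (θ * I) / (1 - w * exp (θ * I))
      + w * exp (-(θ * I)) / (1 - w * exp (-(θ * I)))) * I_sq
  have hcont : Continuous fun θ : ℝ => ((Real.cos θ : ℂ) - z)⁻¹ :=
    Continuous.inv₀ (by fun_prop) (cos_sub_ne_zero hw hq)
  rw [intervalIntegral.integral_eq_sub_of_hasDerivAt
    (fun θ _ => (inv_cos_sub_eq hw hq θ ▸ (hF θ).const_mul (-2 * w / (1 - w ^ 2))))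
    (hcont.intervalIntegrable _ _)]
  simp [F, exp_pi_mul_I, exp_neg]
  ring

lemma integral_cos_nat_mul_eq_zero {n : ℕ} (hn : n ≠ 0) :
    ∫ θ in (0 : ℝ)..Real.pi, Real.cos (n * θ) = 0 := by
  rw [intervalIntegral.integral_comp_mul_left Real.cos (Nat.cast_ne_zero.mpr hn), integral_cos]
  simp [Real.sin_nat_mul_pi]

noncomputable def cosMoment (z : ℂ) (n : ℕ) : ℂ :=
  ∫ θ in (0 : ℝ)..Real.pi, (Real.cos (n * θ) : ℂ) / ((Real.cos θ : ℂ) - z)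

lemma continuous_cos_mul_div_cos_sub (hz : ∀ θ : ℝ, (Real.cos θ : ℂ) - z ≠ 0) (x : ℝ) :
    Continuous fun θ : ℝ => (Real.cos (x * θ) : ℂ) / ((Real.cos θ : ℂ) - z) :=
  Continuous.div (by fun_prop) (by fun_prop) hz

lemma cosMoment_zero (hw : ‖w‖ < 1) (hq : w ^ 2 + 1 = 2 * z * w) :
    cosMoment z 0 = -2 * Real.pi * w / (1 - w ^ 2) := by
  simpa [cosMoment, div_eq_mul_inv] using integral_inv_cos_sub hw hq

lemma cosMoment_one (hz : ∀ θ : ℝ, (Real.cos θ : ℂ) - z ≠ 0) :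
    cosMoment z 1 = Real.pi + z * cosMoment z 0 := by
  have hsplit : ∀ θ : ℝ, (Real.cos (((1 : ℕ) : ℝ) * θ) : ℂ) / ((Real.cos θ : ℂ) - z)
      = 1 + z * ((Real.cos ((0 : ℕ) * θ) : ℂ) / ((Real.cos θ : ℂ) - z)) := fun θ => by
    have := hz θ
    simp only [Nat.cast_one, one_mul, Nat.cast_zero, zero_mul, Real.cos_zero, ofReal_one]
    field_simp
    ring
  simp_rw [cosMoment, hsplit]
  rw [intervalIntegral.integral_add, intervalIntegral.integral_const_mul]
  · simp
  all_goals exact Continuous.intervalIntegrable (by fun_prop) _ _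

-- Split `cos θ = (cos θ - z) + z` in `cos (n+2)θ = 2 cos θ cos (n+1)θ - cos nθ`;
-- the resulting `∫₀^π cos (n+1)θ` vanishes.
lemma cosMoment_add_two (hz : ∀ θ : ℝ, (Real.cos θ : ℂ) - z ≠ 0) (n : ℕ) :
    cosMoment z (n + 2) = 2 * z * cosMoment z (n + 1) - cosMoment z n := by
  have hrec : ∀ θ : ℝ, (Real.cos ((n + 2 : ℕ) * θ) : ℂ) / ((Real.cos θ : ℂ) - z)
      = 2 * (Real.cos ((n + 1 : ℕ) * θ) : ℂ)
        + 2 * z * ((Real.cos ((n + 1 : ℕ) * θ) : ℂ) / ((Real.cos θ : ℂ) - z))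
        - (Real.cos (n * θ) : ℂ) / ((Real.cos θ : ℂ) - z) := by
    intro θ
    have hcos : Real.cos ((n + 2 : ℕ) * θ)
        = 2 * Real.cos θ * Real.cos ((n + 1 : ℕ) * θ) - Real.cos (n * θ) := by
      push_cast
      rw [show ((n : ℝ) + 2) * θ = (n + 1) * θ + θ by ring,
        show (n : ℝ) * θ = (n + 1) * θ - θ by ring, Real.cos_add, Real.cos_sub]
      ring
    rw [hcos]
    have := hz θ
    field_simp
    push_cast
    ring
  simp_rw [cosMoment, hrec]
  rw [intervalIntegral.integral_sub, intervalIntegral.integral_add,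
    intervalIntegral.integral_const_mul, intervalIntegral.integral_const_mul,
    intervalIntegral.integral_ofReal, integral_cos_nat_mul_eq_zero n.succ_ne_zero]
  · simp
  all_goals exact Continuous.intervalIntegrable (by fun_prop) _ _

lemma cosMoment_eq (hw : ‖w‖ < 1) (hq : w ^ 2 + 1 = 2 * z * w) :
    ∀ n : ℕ, cosMoment z n = -2 * Real.pi * w ^ (n + 1) / (1 - w ^ 2)
  | 0 => by rw [cosMoment_zero hw hq, zero_add, pow_one]
  | 1 => by
    have := one_sub_sq_ne_zero hw
    rw [cosMoment_one (cos_sub_ne_zero hw hq), cosMoment_zero hw hq]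
    field_simp
    linear_combination hq
  | n + 2 => by
    have := one_sub_sq_ne_zero hw
    rw [cosMoment_add_two (cos_sub_ne_zero hw hq), cosMoment_eq hw hq (n + 1),
      cosMoment_eq hw hq n]
    field_simp
    linear_combination w ^ (n + 1) * hq

lemma cosMoment_add_two_sub (hw : ‖w‖ < 1) (hq : w ^ 2 + 1 = 2 * z * w) (m : ℕ) :
    cosMoment z (m + 2) - cosMoment z m = 2 * Real.pi * w ^ (m + 1) := by
  have := one_sub_sq_ne_zero hw
  rw [cosMoment_eq hw hq, cosMoment_eq hw hq]
  field_simp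
  ring

lemma integral_cos_sub_cos_div_cos_sub (hz : ∀ θ : ℝ, (Real.cos θ : ℂ) - z ≠ 0) (m n : ℕ) :
    ∫ θ in (0 : ℝ)..Real.pi, ((Real.cos (m * θ) : ℂ) - Real.cos (n * θ)) / ((Real.cos θ : ℂ) - z)
      = cosMoment z m - cosMoment z n := by
  simp_rw [sub_div]
  exact intervalIntegral.integral_sub ((continuous_cos_mul_div_cos_sub hz _).intervalIntegrable _ _)
    ((continuous_cos_mul_div_cos_sub hz _).intervalIntegrable _ _)

end

lemma integral_neg_one_one_eq_integral_sin_smul_comp_cos {E : Type*} [NormedAddCommGroup E]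
    [NormedSpace ℝ E] (f : ℝ → E) :
    ∫ t in (-1 : ℝ)..1, f t = ∫ θ in (0 : ℝ)..Real.pi, Real.sin θ • f (Real.cos θ) := by
  rw [intervalIntegral.integral_of_le (by norm_num), intervalIntegral.integral_of_le Real.pi_pos.le,
    ← integral_Icc_eq_integral_Ioc, ← integral_Icc_eq_integral_Ioc, ← Real.bijOn_cos.image_eq,
    integral_image_eq_integral_abs_deriv_smul measurableSet_Icc
      (fun θ _ => (Real.hasDerivAt_cos θ).hasDerivWithinAt) Real.injOn_cos]
  refine setIntegral_congr_fun measurableSet_Icc fun θ hθ => ?_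
  rw [abs_neg, abs_of_nonneg (Real.sin_nonneg_of_nonneg_of_le_pi hθ.1 hθ.2)]

lemma sin_smul_chebyshevT_sub_div {θ : ℝ} (hθ : θ ∈ Icc 0 Real.pi) (m : ℕ) (z : ℂ) :
    Real.sin θ • (((Chebyshev.T ℂ (m + 2 : ℕ)).eval (Real.cos θ : ℂ)
        - (Chebyshev.T ℂ m).eval (Real.cos θ : ℂ))
      / ((√(1 - Real.cos θ ^ 2) : ℂ) * ((Real.cos θ : ℂ) - z)))
      = ((Real.cos ((m + 2 : ℕ) * θ) : ℂ) - Real.cos (m * θ)) / ((Real.cos θ : ℂ) - z) := by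
  have hT : ∀ n : ℕ, (Chebyshev.T ℂ n).eval (Real.cos θ : ℂ) = Real.cos (n * θ) := fun n => by
    simp
  have hdiff : Real.cos ((m + 2 : ℕ) * θ) - Real.cos (m * θ)
      = -2 * Real.sin ((m + 1) * θ) * Real.sin θ := by
    rw [Real.cos_sub_cos]
    push_cast
    ring_nf
  rw [hT, hT, ← Real.sin_eq_sqrt_one_sub_cos_sq hθ.1 hθ.2, Complex.real_smul, ← ofReal_sub, hdiff]
  rcases eq_or_ne (Real.sin θ) 0 with hs | hs
  · simp [hs]
  · have : (Real.sin θ : ℂ) ≠ 0 := ofReal_ne_zero.mpr hs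
    field_simp

/-- Cauchy transform of modified weighted Chebyshev polynomials:
`𝒞[(T_k - T_{k-2})/√(1-t²)](z) = -i·J₊⁻¹(z)^{k-1}` for `k ≥ 2`, `z ∈ ℂ∖[-1,1]`. -/
theorem cauchy_transform_modified_chebyshevT (k : ℕ) (hk : 2 ≤ k) (z : ℂ)
    (hz : z ∉ Complex.ofReal '' Set.Icc (-1 : ℝ) 1) :
    (1 / (2 * (Real.pi : ℂ) * Complex.I)) *
        ∫ t in (-1 : ℝ)..1,
          ((Polynomial.Chebyshev.T ℂ k).eval (t : ℂ)
              - (Polynomial.Chebyshev.T ℂ ((k : ℤ) - 2)).eval (t : ℂ))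
            / ((Real.sqrt (1 - t ^ 2) : ℂ) * ((t : ℂ) - z))
      = -Complex.I * (Jinv z) ^ (k - 1) := by
  obtain ⟨m, rfl⟩ : ∃ m, k = m + 2 := ⟨k - 2, by omega⟩
  have hw := norm_Jinv_lt_one hz
  have hq := Jinv_sq_add_one z
  rw [show ((m + 2 : ℕ) : ℤ) - 2 = m by omega, integral_neg_one_one_eq_integral_sin_smul_comp_cos,
    intervalIntegral.integral_congr fun θ hθ => sin_smul_chebyshevT_sub_div
      (by rwa [uIcc_of_le Real.pi_pos.le] at hθ) m z,
    integral_cos_sub_cos_div_cos_sub (cos_sub_ne_zero hw hq),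
    cosMoment_add_two_sub hw hq, show m + 2 - 1 = m + 1 by omega]
  have := Real.pi_ne_zero
  field_simp
  linear_combination Jinv z ^ (m + 1) * I_sq
end

section
/- The function z ↦ z·J₊⁻¹(z) tends to 1/2 as |z| → ∞; that is, for every ε > 0 there exists R > 0 such that |z·J₊⁻¹(z) − 1/2| < ε whenever |z| > R. -/
/-!
Write `s = (z - 1)^{1/2} (z + 1)^{1/2}`, so that `s² = z² - 1` and `J = z - s` satisfies
`J (2z - J) = 1`, i.e. `z J - 1/2 = J² / 2`. Principal square roots have nonnegative real part,
and the imaginary parts of `√(z - 1)` and `√(z + 1)` both have the sign of `Im z`; hence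
`Re (z s̄) ≥ 0`, so `|z| ≤ |z + s| = 1 / |J|` and `|z J - 1/2| ≤ 1 / (2 |z|²)`.
-/

open Filter Set

open ComplexConjugate

namespace Complex

lemma cpow_inv_two_sq (x : ℂ) : (x ^ (2⁻¹ : ℂ)) ^ 2 = x := by
  exact_mod_cast cpow_nat_inv_pow x two_ne_zero

lemma re_cpow_inv_two_nonneg (x : ℂ) : 0 ≤ (x ^ (2⁻¹ : ℂ)).re := by
  rw [cpow_inv_two_re]
  exact Real.sqrt_nonneg _

lemma im_cpow_inv_two_mul_im_cpow_inv_two_nonneg {x y : ℂ} (h : x.im = y.im) :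
    0 ≤ (x ^ (2⁻¹ : ℂ)).im * (y ^ (2⁻¹ : ℂ)).im := by
  rcases le_or_gt 0 x.im with hx | hx
  · rw [cpow_inv_two_im_eq_sqrt hx, cpow_inv_two_im_eq_sqrt (h ▸ hx)]
    positivity
  · rw [cpow_inv_two_im_eq_neg_sqrt hx, cpow_inv_two_im_eq_neg_sqrt (h ▸ hx), neg_mul_neg]
    positivity

lemma re_conj_cpow_inv_two_mul_cpow_inv_two_nonneg {x y : ℂ} (h : x.im = y.im) :
    0 ≤ (conj (x ^ (2⁻¹ : ℂ)) * y ^ (2⁻¹ : ℂ)).re := by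
  rw [mul_re, conj_re, conj_im, neg_mul, sub_neg_eq_add]
  exact add_nonneg (mul_nonneg (re_cpow_inv_two_nonneg x) (re_cpow_inv_two_nonneg y))
    (im_cpow_inv_two_mul_im_cpow_inv_two_nonneg h)

lemma re_add_sq_mul_conj_mul (u v : ℂ) :
    ((u ^ 2 + v ^ 2) * conj (u * v)).re = (normSq u + normSq v) * (conj u * v).re := by
  simp only [mul_re, mul_im, add_re, add_im, conj_re, conj_im, normSq_apply, pow_two]
  ring

lemma norm_le_norm_add_of_re_mul_conj_nonneg {z s : ℂ} (h : 0 ≤ (z * conj s).re) :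
    ‖z‖ ≤ ‖z + s‖ := by
  rw [← sq_le_sq₀ (norm_nonneg _) (norm_nonneg _), Complex.sq_norm, Complex.sq_norm, normSq_add]
  linarith [normSq_nonneg s]

end Complex

open Complex

lemma Jinv_mul_two_mul_sub_Jinv (z : ℂ) : Jinv z * (2 * z - Jinv z) = 1 := by
  have hsq (x : ℂ) : (x ^ ((1 : ℂ) / 2)) ^ 2 = x := by rw [one_div, cpow_inv_two_sq]
  have hprod : ((z - 1) ^ ((1 : ℂ) / 2) * (z + 1) ^ ((1 : ℂ) / 2)) ^ 2 = (z - 1) * (z + 1) := by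
    rw [mul_pow, hsq, hsq]
  unfold Jinv
  linear_combination -hprod

lemma norm_le_norm_two_mul_sub_Jinv (z : ℂ) : ‖z‖ ≤ ‖2 * z - Jinv z‖ := by
  set u := (z - 1) ^ (2⁻¹ : ℂ)
  set v := (z + 1) ^ (2⁻¹ : ℂ)
  have hz : u ^ 2 + v ^ 2 = 2 * z := by
    rw [cpow_inv_two_sq, cpow_inv_two_sq]
    ring
  have huv : 0 ≤ (conj u * v).re := re_conj_cpow_inv_two_mul_cpow_inv_two_nonneg (by simp)
  have h2 : 2 * z - Jinv z = z + u * v := by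
    simp only [Jinv, one_div, u, v]
    ring
  rw [h2]
  refine norm_le_norm_add_of_re_mul_conj_nonneg ?_
  have hre := re_add_sq_mul_conj_mul u v
  rw [hz, mul_assoc, ← ofReal_ofNat, re_ofReal_mul] at hre
  linarith [mul_nonneg (add_nonneg (normSq_nonneg u) (normSq_nonneg v)) huv]

lemma norm_Jinv_mul_norm_le_one (z : ℂ) : ‖Jinv z‖ * ‖z‖ ≤ 1 := by
  calc ‖Jinv z‖ * ‖z‖ ≤ ‖Jinv z‖ * ‖2 * z - Jinv z‖ :=
        mul_le_mul_of_nonneg_left (norm_le_norm_two_mul_sub_Jinv z) (norm_nonneg _)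
    _ = 1 := by rw [← norm_mul, Jinv_mul_two_mul_sub_Jinv, norm_one]

lemma mul_Jinv_sub_half (z : ℂ) : z * Jinv z - 1 / 2 = Jinv z ^ 2 / 2 := by
  linear_combination Jinv_mul_two_mul_sub_Jinv z / 2

lemma norm_mul_Jinv_sub_half_mul_sq_le (z : ℂ) : ‖z * Jinv z - 1 / 2‖ * ‖z‖ ^ 2 ≤ 1 / 2 := by
  rw [mul_Jinv_sub_half, norm_div, norm_pow, Complex.norm_two, div_mul_eq_mul_div, ← mul_pow]
  gcongr
  exact pow_le_one₀ (by positivity) (norm_Jinv_mul_norm_le_one z)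

/-- `z·J₊⁻¹(z) → 1/2` as `|z| → ∞`. -/
theorem Jinv_asymptotics :
    ∀ ε : ℝ, 0 < ε → ∃ R : ℝ, 0 < R ∧ ∀ z : ℂ, R < ‖z‖ →
      ‖z * Jinv z - 1 / 2‖ < ε := by
  intro ε hε
  refine ⟨1 + 1 / ε, by positivity, fun z hz => ?_⟩
  have hz1 : 1 < ‖z‖ := by linarith [one_div_pos.2 hε]
  have hzε : 1 < ε * ‖z‖ := by
    rw [← div_lt_iff₀' hε]
    linarith
  refine lt_of_mul_lt_mul_right ?_ (sq_nonneg ‖z‖)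
  calc ‖z * Jinv z - 1 / 2‖ * ‖z‖ ^ 2 ≤ 1 / 2 := norm_mul_Jinv_sub_half_mul_sq_le z
    _ < ε * ‖z‖ ^ 2 := by nlinarith
end
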